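/- arXiv:2601.12677 — 2 statements merged into one kernel-verified Lean document; each statement's English description precedes it below -/
import Mathlib

section
/- Let (ξ_i)_{i≥1} be i.i.d. nonnegative random variables, let N_n be Poisson with mean n independent of (ξ_i), and suppose E[ξ₁] ≤ C/n for a constant C and all n (ξ₁'s law may depend on n). Let B ⊆ [0,1] be measurable with Leb(∂B) = 0 and suppose for every ε > 0 there is N such that |Leb(B) − m^{-1}·#{i ∈ [m] : i/m ∈ B}| ≤ ε for all m ≥ N. Then E[ | ∑_{i=1}^{n} 1{i/n ∈ B} ξ_i − ∑_{i=1}^{N_n} 1{i/N_n ∈ B} ξ_i | ] → 0 as n → ∞. -/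
open MeasureTheory Set Filter ProbabilityTheory Metric Finset
open scoped ENNReal NNReal Topology symmDiff Nat

/-!
Write `Δ k` for the symmetric difference of the grid sets `{i ≤ n : i/n ∈ B}` and
`{i ≤ k : i/k ∈ B}`. On `{N = k}` the two sums differ by at most `∑_{i ∈ Δ k} ξ_i`, and since `N`
is independent of the identically distributed `ξ_i`, the expected difference is at most
`E ξ₁ · E #Δ(N) ≤ (C / n) · E #Δ(N)`.

An index `i ≤ min n k` lies in `Δ k` only if `i/n` and `i/k` lie on opposite sides of `∂B`, so
`i/n` is within `(|k - n| + 1)/n` of `∂B`; and the grid points `i/n` within `r` of `∂B` number at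
most `n · Leb(∂B_{r + 1/n})`, as the cells `(i/n, (i+1)/n]` are disjoint. Hence
`#Δ k ≤ n Leb(∂B_ρ) + |k - n|` when `|k - n| + 2 ≤ ρ n`, and `#Δ k ≤ n + |k - n|`, which is then
`O_ρ(|k - n| + 1)`, otherwise. As `E|N - n| ≤ √n`, the expected difference is at most
`C Leb(∂B_ρ) + O_ρ(n^{-1/2})`, and `Leb(∂B_ρ) → Leb(∂B) = 0` as `ρ → 0`.
-/

theorem IsPreconnected.inter_frontier_nonempty {X : Type*} [TopologicalSpace X] {s t : Set X}
    (hs : IsPreconnected s) (hst : (s ∩ t).Nonempty) (hst' : (s \ t).Nonempty) :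
    (s ∩ frontier t).Nonempty := by
  by_contra! h
  have hs_sub : s ⊆ interior t ∪ (closure t)ᶜ := fun x hx => by
    by_cases hxc : x ∈ closure t
    · exact .inl (by_contra fun hxi => h.subset ⟨hx, hxc, hxi⟩)
    · exact .inr hxc
  obtain ⟨x, hxs, hxt⟩ := hst
  obtain ⟨y, hys, hyt⟩ := hst'
  have hx : x ∈ interior t := (hs_sub hxs).resolve_right (not_not.2 (subset_closure hxt))
  have hy : y ∈ (closure t)ᶜ := (hs_sub hys).resolve_left fun hyi => hyt (interior_subset hyi)
  obtain ⟨z, -, hzi, hzc⟩ := hs _ _ isOpen_interior isClosed_closure.isOpen_compl hs_sub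
    ⟨x, hxs, hx⟩ ⟨y, hys, hy⟩
  exact hzc (interior_subset_closure hzi)

theorem Real.exists_mem_frontier_dist_le {B : Set ℝ} {x y : ℝ} (hx : x ∈ B) (hy : y ∉ B) :
    ∃ z ∈ frontier B, dist x z ≤ dist x y := by
  obtain ⟨z, hz, hzB⟩ := isPreconnected_uIcc.inter_frontier_nonempty
    ⟨x, left_mem_uIcc, hx⟩ ⟨y, right_mem_uIcc, hy⟩
  exact ⟨z, hzB, Real.dist_le_of_mem_uIcc left_mem_uIcc hz⟩

theorem Real.dist_div_div_le {i n k : ℝ} (hn : 0 < n) (hi : 0 ≤ i) (hik : i ≤ k) :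
    dist (i / n) (i / k) ≤ |k - n| / n := by
  rcases (hi.trans hik).eq_or_lt with hk | hk
  · subst hk
    simp [le_antisymm hik hi, div_nonneg (abs_nonneg _) hn.le]
  rw [Real.dist_eq, div_sub_div _ _ hn.ne' hk.ne', abs_div, abs_of_pos (mul_pos hn hk),
    div_le_div_iff₀ (mul_pos hn hk) hn, show i * k - n * i = i * (k - n) by ring, abs_mul,
    abs_of_nonneg hi]
  have := mul_le_mul_of_nonneg_left hik (mul_nonneg (abs_nonneg (k - n)) hn.le)
  linarith

theorem Finset.abs_sum_sub_sum_le_sum_symmDiff {ι M : Type*} [DecidableEq ι] [AddCommGroup M]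
    [LinearOrder M] [IsOrderedAddMonoid M] {f : ι → M} (hf : ∀ i, 0 ≤ f i) (s t : Finset ι) :
    |∑ i ∈ s, f i - ∑ i ∈ t, f i| ≤ ∑ i ∈ s ∆ t, f i := by
  rw [← Finset.sum_sdiff_sub_sum_sdiff, Finset.symmDiff_def,
    Finset.sum_union disjoint_sdiff_sdiff, abs_sub_le_iff]
  have h₁ := Finset.sum_nonneg fun i (_ : i ∈ s \ t) => hf i
  have h₂ := Finset.sum_nonneg fun i (_ : i ∈ t \ s) => hf i
  exact ⟨(sub_le_self _ h₂).trans (le_add_of_nonneg_right h₂),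
    (sub_le_self _ h₁).trans (le_add_of_nonneg_left h₁)⟩

theorem tendsto_nhds_zero_of_forall_eventually_le {ι : Type*} {l : Filter ι} {u : ι → ℝ}
    (hu : ∀ i, 0 ≤ u i)
    (h : ∀ ε > 0, ∃ a : ι → ℝ, Tendsto a l (𝓝 0) ∧ ∀ᶠ i in l, u i ≤ ε + a i) :
    Tendsto u l (𝓝 0) := by
  refine tendsto_order.2 ⟨fun x hx => .of_forall fun i => hx.trans_le (hu i), fun x hx => ?_⟩
  obtain ⟨a, ha, hle⟩ := h (x / 2) (half_pos hx)
  filter_upwards [hle, ha.eventually (gt_mem_nhds (half_pos hx))] with i hi hai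
  linarith

open Classical in
theorem card_filter_div_mem_thickening_le (F : Set ℝ) (s : Finset ℕ) {n : ℕ} (hn : 0 < n)
    (r : ℝ) :
    (#(s.filter fun i : ℕ => (i : ℝ) / n ∈ thickening r F) : ℝ≥0∞) ≤
      n * volume (thickening (r + 1 / n) F) := by
  set t := s.filter fun i : ℕ => (i : ℝ) / n ∈ thickening r F
  set I : ℕ → Set ℝ := fun i => Ioc ((i : ℝ) / n) ((Order.succ i : ℕ) / n)
  have hmono : Monotone fun i : ℕ => (i : ℝ) / n := fun i j hij =>
    div_le_div_of_nonneg_right (by exact_mod_cast hij) n.cast_nonneg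
  have hdisj : (t : Set ℕ).PairwiseDisjoint I :=
    (hmono.pairwise_disjoint_on_Ioc_succ).set_pairwise _
  have hvol : ∀ i, volume (I i) = (n : ℝ≥0∞)⁻¹ := fun i => by
    rw [Real.volume_Ioc, Order.succ_eq_add_one, ← ENNReal.ofReal_natCast,
      ← ENNReal.ofReal_inv_of_pos (by positivity)]
    congr 1
    push_cast
    ring
  have hsub : ⋃ i ∈ t, I i ⊆ thickening (r + 1 / n) F := by
    refine iUnion₂_subset fun i hi x hx => ?_
    obtain ⟨z, hzF, hz⟩ := mem_thickening_iff.1 (Finset.mem_filter.1 hi).2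
    refine mem_thickening_iff.2 ⟨z, hzF, ?_⟩
    have hxi : dist x ((i : ℝ) / n) ≤ 1 / n := by
      obtain ⟨hx1, hx2⟩ := hx
      rw [Order.succ_eq_add_one, Nat.cast_add_one, add_div] at hx2
      rw [Real.dist_eq, abs_of_pos (by linarith)]
      linarith
    linarith [dist_triangle x ((i : ℝ) / n) z]
  have hn' : (n : ℝ≥0∞) ≠ 0 := by exact_mod_cast hn.ne'
  calc (#t : ℝ≥0∞) = n * ∑ i ∈ t, volume (I i) := by
        rw [Finset.sum_congr rfl fun i _ => hvol i, Finset.sum_const, nsmul_eq_mul,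
          mul_left_comm, ENNReal.mul_inv_cancel hn' (ENNReal.natCast_ne_top n), mul_one]
    _ = n * volume (⋃ i ∈ t, I i) := by
        rw [measure_biUnion_finset hdisj fun i _ => measurableSet_Ioc]
    _ ≤ n * volume (thickening (r + 1 / n) F) := by gcongr

theorem exists_pos_measure_thickening_le {X : Type*} [PseudoMetricSpace X] [MeasurableSpace X]
    [OpensMeasurableSpace X] {μ : Measure X} {s : Set X}
    (hs : ∃ R > 0, μ (thickening R s) ≠ ∞) (h : μ (closure s) = 0) {ε : ℝ≥0∞} (hε : 0 < ε) :
    ∃ ρ > 0, μ (thickening ρ s) ≤ ε := by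
  obtain ⟨ρ, hρ, hρ₀⟩ :=
    (((tendsto_measure_thickening hs).eventually (h ▸ gt_mem_nhds hε)).and
      self_mem_nhdsWithin).exists
  exact ⟨ρ, hρ₀, hρ.le⟩

theorem hasSum_poisson_mul_descFactorial (r : ℝ≥0) (j : ℕ) :
    HasSum (fun k => Real.exp (-r) * r ^ k / k ! * k.descFactorial j) ((r : ℝ) ^ j) := by
  rw [← hasSum_nat_add_iff' j, Finset.sum_eq_zero fun i hi => by
    rw [Nat.descFactorial_eq_zero_iff_lt.2 (Finset.mem_range.1 hi), Nat.cast_zero, mul_zero],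
    sub_zero]
  have h := (hasSum_one_poissonMeasure r).mul_left ((r : ℝ) ^ j)
  rw [mul_one] at h
  refine h.congr_fun fun m => ?_
  have hfact := Nat.factorial_mul_descFactorial (Nat.le_add_left j m)
  rw [Nat.add_sub_cancel] at hfact
  have : ((m + j).descFactorial j : ℝ) ≠ 0 := by
    exact_mod_cast (Nat.descFactorial_pos.2 (Nat.le_add_left j m)).ne'
  rw [← hfact]
  push_cast
  field_simp
  ring

theorem hasSum_poisson_mul_sq_sub (r : ℝ≥0) :
    HasSum (fun k => Real.exp (-r) * r ^ k / k ! * ((k : ℝ) - r) ^ 2) r := by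
  -- `(k - r)² = k(k - 1) + (1 - 2r) k + r²`, whose factorial moments are `r²`, `r` and `1`.
  have h := ((hasSum_poisson_mul_descFactorial r 2).add
    ((hasSum_poisson_mul_descFactorial r 1).mul_left (1 - 2 * (r : ℝ)))).add
    ((hasSum_poisson_mul_descFactorial r 0).mul_left ((r : ℝ) ^ 2))
  rw [show (r : ℝ) ^ 2 + (1 - 2 * r) * r ^ 1 + r ^ 2 * r ^ 0 = r by ring] at h
  refine h.congr_fun fun k => ?_
  rw [Nat.cast_descFactorial_two, Nat.descFactorial_one, Nat.descFactorial_zero]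
  push_cast
  ring

theorem lintegral_poissonMeasure (r : ℝ≥0) (f : ℕ → ℝ≥0∞) :
    ∫⁻ k, f k ∂poissonMeasure r = ∑' k, ENNReal.ofReal (Real.exp (-r) * r ^ k / k !) * f k := by
  simp [poissonMeasure, lintegral_sum_measure, mul_comm]

theorem lintegral_abs_sub_le_sqrt_poissonMeasure {r : ℝ≥0} (hr : 0 < r) :
    ∫⁻ k, ENNReal.ofReal |(k : ℝ) - r| ∂poissonMeasure r ≤ ENNReal.ofReal √r := by
  have hsqrt : 0 < √(r : ℝ) := Real.sqrt_pos.2 hr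
  -- AM-GM: `2 √r |x| ≤ r + x ^ 2`, and the right side has Poisson mean `2 r`.
  have hAMGM : ∀ x : ℝ, |x| ≤ (r + x ^ 2) / (2 * √r) := fun x => by
    rw [le_div_iff₀ (by positivity), ← sq_abs x]
    nlinarith [sq_nonneg (|x| - √r), Real.sq_sqrt r.coe_nonneg]
  have hsum : HasSum (fun k => Real.exp (-r) * r ^ k / k ! * ((r + ((k : ℝ) - r) ^ 2) / (2 * √r)))
      √r := by
    have h := (((hasSum_one_poissonMeasure r).mul_left (r : ℝ)).add
      (hasSum_poisson_mul_sq_sub r)).div_const (2 * √r)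
    rw [show ((r : ℝ) * 1 + r) / (2 * √r) = √r by
      field_simp; rw [Real.sq_sqrt r.coe_nonneg]; ring] at h
    exact h.congr_fun fun k => by ring
  rw [lintegral_poissonMeasure, ← hsum.tsum_eq,
    ENNReal.ofReal_tsum_of_nonneg (fun k => by positivity) hsum.summable]
  refine ENNReal.tsum_le_tsum fun k => ?_
  rw [← ENNReal.ofReal_mul (by positivity)]
  exact ENNReal.ofReal_le_ofReal (mul_le_mul_of_nonneg_left (hAMGM _) (by positivity))

theorem map_eq_poissonMeasure {Ω : Type*} [MeasurableSpace Ω] {P : Measure Ω} {N : Ω → ℕ}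
    (hN : Measurable N) {r : ℝ≥0}
    (hlaw : ∀ k, P {ω | N ω = k} = ENNReal.ofReal (Real.exp (-r) * r ^ k / k !)) :
    P.map N = poissonMeasure r :=
  Measure.ext_iff_singleton.2 fun k => by
    rw [Measure.map_apply hN (measurableSet_singleton k), poissonMeasure_singleton]
    exact hlaw k

theorem lintegral_comp_le_of_map_eq_poissonMeasure {Ω : Type*} [MeasurableSpace Ω]
    {P : Measure Ω} [IsProbabilityMeasure P] {N : Ω → ℕ} (hN : Measurable N) {r : ℝ≥0}
    (hr : 0 < r) (hlaw : P.map N = poissonMeasure r) {f : ℕ → ℝ≥0∞} {a b : ℝ} (ha : 0 ≤ a)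
    (hb : 0 ≤ b) (hf : ∀ k, f k ≤ ENNReal.ofReal (a + b * |(k : ℝ) - r|)) :
    ∫⁻ ω, f (N ω) ∂P ≤ ENNReal.ofReal (a + b * √r) := by
  have hdev : ∫⁻ ω, ENNReal.ofReal |(N ω : ℝ) - r| ∂P ≤ ENNReal.ofReal √r := by
    have hmap := lintegral_map (μ := P) (f := fun k : ℕ => ENNReal.ofReal |(k : ℝ) - r|)
      (measurable_of_countable _) hN
    rw [hlaw] at hmap
    exact hmap ▸ lintegral_abs_sub_le_sqrt_poissonMeasure hr
  calc ∫⁻ ω, f (N ω) ∂P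
      ≤ ∫⁻ ω, ENNReal.ofReal a + ENNReal.ofReal b * ENNReal.ofReal |(N ω : ℝ) - r| ∂P :=
        lintegral_mono fun ω => by
          rw [← ENNReal.ofReal_mul hb, ← ENNReal.ofReal_add ha (by positivity)]
          exact hf _
    _ = ENNReal.ofReal a + ENNReal.ofReal b * ∫⁻ ω, ENNReal.ofReal |(N ω : ℝ) - r| ∂P := by
        rw [lintegral_add_left measurable_const, lintegral_const, measure_univ, mul_one,
          lintegral_const_mul' _ _ ENNReal.ofReal_ne_top]
    _ ≤ ENNReal.ofReal (a + b * √r) := by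
        rw [ENNReal.ofReal_add ha (by positivity), ENNReal.ofReal_mul hb]
        gcongr

section Independence

variable {Ω : Type*} [MeasurableSpace Ω] {P : Measure Ω} {ξ : ℕ → Ω → ℝ} {N : Ω → ℕ}

theorem lintegral_comp_mul_ofReal_of_indepFun (hξ : ∀ i, Measurable (ξ i)) (hN : Measurable N)
    (hindep : IndepFun N (fun ω i => ξ i ω) P) (f : ℕ → ℝ≥0∞) (i : ℕ) :
    ∫⁻ ω, f (N ω) * ENNReal.ofReal (ξ i ω) ∂P =
      (∫⁻ ω, f (N ω) ∂P) * ∫⁻ ω, ENNReal.ofReal (ξ i ω) ∂P := by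
  have hg : Measurable fun x : ℕ → ℝ => ENNReal.ofReal (x i) :=
    ENNReal.measurable_ofReal.comp (measurable_pi_apply i)
  exact lintegral_mul_eq_lintegral_mul_lintegral_of_indepFun''
    ((measurable_of_countable f).comp hN).aemeasurable
    (hg.comp (measurable_pi_lambda _ hξ)).aemeasurable
    (hindep.comp (measurable_of_countable f) hg)

theorem lintegral_sum_comp_eq_lintegral_card_mul (hξ : ∀ i, Measurable (ξ i)) (hN : Measurable N)
    (hindep : IndepFun N (fun ω i => ξ i ω) P) (hident : ∀ i, IdentDistrib (ξ i) (ξ 1) P P)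
    (s : ℕ → Finset ℕ) :
    ∫⁻ ω, ∑ i ∈ s (N ω), ENNReal.ofReal (ξ i ω) ∂P =
      (∫⁻ ω, (#(s (N ω)) : ℝ≥0∞) ∂P) * ∫⁻ ω, ENNReal.ofReal (ξ 1 ω) ∂P := by
  classical
  set f : ℕ → ℕ → ℝ≥0∞ := fun i k => if i ∈ s k then 1 else 0
  have hsum : ∀ ω, ∑ i ∈ s (N ω), ENNReal.ofReal (ξ i ω) =
      ∑' i, f i (N ω) * ENNReal.ofReal (ξ i ω) := fun ω => by
    rw [sum_eq_tsum_indicator]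
    exact tsum_congr fun i => by simp [f, Set.indicator_apply, ite_mul]
  have hcard : ∀ ω, (#(s (N ω)) : ℝ≥0∞) = ∑' i, f i (N ω) := fun ω => by
    rw [Finset.card_eq_sum_ones, Nat.cast_sum, sum_eq_tsum_indicator]
    exact tsum_congr fun i => by simp [f, Set.indicator_apply]
  have hf : ∀ i, Measurable fun ω => f i (N ω) := fun i =>
    (measurable_of_countable (f i)).comp hN
  have hmean : ∀ i, ∫⁻ ω, ENNReal.ofReal (ξ i ω) ∂P = ∫⁻ ω, ENNReal.ofReal (ξ 1 ω) ∂P :=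
    fun i => ((hident i).comp ENNReal.measurable_ofReal).lintegral_eq
  simp_rw [hsum, hcard]
  rw [lintegral_tsum (f := fun i ω => f i (N ω) * ENNReal.ofReal (ξ i ω))
      fun i => ((hf i).mul (hξ i).ennreal_ofReal).aemeasurable,
    lintegral_tsum fun i => (hf i).aemeasurable, ← ENNReal.tsum_mul_right]
  refine tsum_congr fun i => ?_
  rw [lintegral_comp_mul_ofReal_of_indepFun hξ hN hindep, hmean]

theorem integrable_of_le_on_levelSet (hξ : ∀ i, Measurable (ξ i)) (hξ₀ : ∀ i ω, 0 ≤ ξ i ω)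
    (hN : Measurable N) (hindep : IndepFun N (fun ω i => ξ i ω) P)
    (hident : ∀ i, IdentDistrib (ξ i) (ξ 1) P P) {G : Ω → ℝ} (hG : Integrable G P) {k j : ℕ}
    (hk : P {ω | N ω = k} ≠ 0) (hle : ∀ ω, N ω = k → ξ j ω ≤ G ω) :
    Integrable (ξ 1) P := by
  rw [← lintegral_ofReal_ne_top_iff_integrable (hξ 1).aestronglyMeasurable
    (ae_of_all _ (hξ₀ 1))]
  intro htop
  have hind : ∫⁻ ω, ({k} : Set ℕ).indicator 1 (N ω) ∂P = P {ω | N ω = k} := by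
    rw [← lintegral_map (measurable_of_countable _) hN,
      lintegral_indicator_one (measurableSet_singleton k), Measure.map_apply hN
      (measurableSet_singleton k)]
    rfl
  refine hG.lintegral_lt_top.ne (top_le_iff.1 ?_)
  calc ∞ = (∫⁻ ω, ({k} : Set ℕ).indicator 1 (N ω) ∂P) * ∫⁻ ω, ENNReal.ofReal (ξ j ω) ∂P := by
        have hmean : ∫⁻ ω, ENNReal.ofReal (ξ j ω) ∂P = ∫⁻ ω, ENNReal.ofReal (ξ 1 ω) ∂P :=
          ((hident j).comp ENNReal.measurable_ofReal).lintegral_eq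
        rw [hind, hmean, htop, ENNReal.mul_top hk]
    _ = ∫⁻ ω, ({k} : Set ℕ).indicator 1 (N ω) * ENNReal.ofReal (ξ j ω) ∂P :=
        (lintegral_comp_mul_ofReal_of_indepFun hξ hN hindep _ j).symm
    _ ≤ ∫⁻ ω, ENNReal.ofReal (G ω) ∂P := lintegral_mono fun ω => by
        by_cases hω : N ω = k
        · simpa [hω] using ENNReal.ofReal_le_ofReal (hle ω hω)
        · simp [hω]

theorem lintegral_abs_sum_sub_sum_le (hξ : ∀ i, Measurable (ξ i)) (hξ₀ : ∀ i ω, 0 ≤ ξ i ω)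
    (hN : Measurable N) (hindep : IndepFun N (fun ω i => ξ i ω) P)
    (hident : ∀ i, IdentDistrib (ξ i) (ξ 1) P P) (t : Finset ℕ) (s : ℕ → Finset ℕ) :
    ∫⁻ ω, ENNReal.ofReal |∑ i ∈ t, ξ i ω - ∑ i ∈ s (N ω), ξ i ω| ∂P ≤
      (∫⁻ ω, (#(t ∆ s (N ω)) : ℝ≥0∞) ∂P) * ∫⁻ ω, ENNReal.ofReal (ξ 1 ω) ∂P := by
  classical
  calc ∫⁻ ω, ENNReal.ofReal |∑ i ∈ t, ξ i ω - ∑ i ∈ s (N ω), ξ i ω| ∂P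
      ≤ ∫⁻ ω, ∑ i ∈ t ∆ s (N ω), ENNReal.ofReal (ξ i ω) ∂P :=
        lintegral_mono fun ω => by
          rw [← ENNReal.ofReal_sum_of_nonneg fun i _ => hξ₀ i ω]
          exact ENNReal.ofReal_le_ofReal
            (Finset.abs_sum_sub_sum_le_sum_symmDiff (hξ₀ · ω) _ _)
    _ = (∫⁻ ω, (#(t ∆ s (N ω)) : ℝ≥0∞) ∂P) * ∫⁻ ω, ENNReal.ofReal (ξ 1 ω) ∂P :=
        lintegral_sum_comp_eq_lintegral_card_mul hξ hN hindep hident fun k => t ∆ s k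

end Independence

open Classical in
noncomputable def gridSet (B : Set ℝ) (m : ℕ) : Finset ℕ :=
  (Finset.Icc 1 m).filter fun i : ℕ => (i : ℝ) / m ∈ B

theorem mem_gridSet {B : Set ℝ} {m i : ℕ} :
    i ∈ gridSet B m ↔ i ∈ Finset.Icc 1 m ∧ (i : ℝ) / m ∈ B := by
  classical
  simp only [gridSet, Finset.mem_filter]

theorem gridSet_zero (B : Set ℝ) : gridSet B 0 = ∅ := by
  ext i
  simp [mem_gridSet]

theorem sum_indicator_eq_sum_gridSet (B : Set ℝ) (m : ℕ) (x : ℕ → ℝ) :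
    ∑ i ∈ Finset.Icc 1 m, B.indicator (fun _ => x i) ((i : ℝ) / m) = ∑ i ∈ gridSet B m, x i := by
  classical
  simp only [gridSet, Finset.sum_filter, Set.indicator_apply]

open Classical in
theorem gridSet_symmDiff_subset (B : Set ℝ) {n : ℕ} (hn : 0 < n) (k : ℕ) :
    gridSet B n ∆ gridSet B k ⊆
      (Finset.Icc 1 n).filter (fun i : ℕ =>
        (i : ℝ) / n ∈ thickening ((|(k : ℝ) - n| + 1) / n) (frontier B)) ∪
      Finset.Ioc (min n k) (max n k) := by
  intro i hi
  have hIcc : 1 ≤ i ∧ i ≤ max n k := by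
    rcases Finset.mem_symmDiff.1 hi with ⟨h, -⟩ | ⟨h, -⟩ <;>
      · have := (mem_gridSet.1 h).1
        rw [Finset.mem_Icc] at this
        omega
  rw [Finset.mem_union, Finset.mem_filter, Finset.mem_Ioc]
  by_cases him : i ≤ min n k
  swap
  · exact .inr ⟨not_le.1 him, hIcc.2⟩
  have hin : i ∈ Finset.Icc 1 n := Finset.mem_Icc.2 ⟨hIcc.1, him.trans (min_le_left _ _)⟩
  have hik : i ∈ Finset.Icc 1 k := Finset.mem_Icc.2 ⟨hIcc.1, him.trans (min_le_right _ _)⟩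
  have hcross : ∃ z ∈ frontier B, dist ((i : ℝ) / n) z ≤ dist ((i : ℝ) / n) ((i : ℝ) / k) := by
    rcases Finset.mem_symmDiff.1 hi with ⟨h, h'⟩ | ⟨h, h'⟩
    · exact Real.exists_mem_frontier_dist_le (mem_gridSet.1 h).2
        fun hB => h' (mem_gridSet.2 ⟨hik, hB⟩)
    · simpa only [frontier_compl] using Real.exists_mem_frontier_dist_le (B := Bᶜ)
        (fun hB => h' (mem_gridSet.2 ⟨hin, hB⟩)) (not_not.2 (mem_gridSet.1 h).2)
  obtain ⟨z, hzB, hz⟩ := hcross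
  refine .inl ⟨hin, mem_thickening_iff.2 ⟨z, hzB, hz.trans_lt ?_⟩⟩
  have hn' : (0 : ℝ) < n := by exact_mod_cast hn
  calc dist ((i : ℝ) / n) ((i : ℝ) / k) ≤ |(k : ℝ) - n| / n :=
        Real.dist_div_div_le hn' i.cast_nonneg (by exact_mod_cast (Finset.mem_Icc.1 hik).2)
    _ < (|(k : ℝ) - n| + 1) / n := by gcongr; linarith

theorem card_gridSet_symmDiff_le (B : Set ℝ) {n : ℕ} (hn : 0 < n) (k : ℕ) :
    (#(gridSet B n ∆ gridSet B k) : ℝ≥0∞) ≤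
      n * volume (thickening ((|(k : ℝ) - n| + 2) / n) (frontier B)) +
        ENNReal.ofReal |(k : ℝ) - n| := by
  classical
  have hIoc : (#(Finset.Ioc (min n k) (max n k)) : ℝ≥0∞) = ENNReal.ofReal |(k : ℝ) - n| := by
    rw [Nat.card_Ioc, ← ENNReal.ofReal_natCast, Nat.cast_sub min_le_max, Nat.cast_max,
      Nat.cast_min, max_sub_min_eq_abs]
  have hrad : (|(k : ℝ) - n| + 1) / n + 1 / n = (|(k : ℝ) - n| + 2) / n := by ring
  calc (#(gridSet B n ∆ gridSet B k) : ℝ≥0∞)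
      ≤ (#((Finset.Icc 1 n).filter (fun i : ℕ =>
            (i : ℝ) / n ∈ thickening ((|(k : ℝ) - n| + 1) / n) (frontier B))) : ℝ≥0∞) +
          #(Finset.Ioc (min n k) (max n k)) := by
        exact_mod_cast (Finset.card_le_card (gridSet_symmDiff_subset B hn k)).trans
          (card_union_le _ _)
    _ ≤ n * volume (thickening ((|(k : ℝ) - n| + 2) / n) (frontier B)) +
          ENNReal.ofReal |(k : ℝ) - n| := by
        rw [hIoc, ← hrad]
        gcongr
        exact card_filter_div_mem_thickening_le _ _ hn _

theorem card_gridSet_symmDiff_le_max (B : Set ℝ) (n k : ℕ) :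
    #(gridSet B n ∆ gridSet B k) ≤ max n k := by
  classical
  have hsub : gridSet B n ∆ gridSet B k ⊆ Finset.Icc 1 (max n k) :=
    symmDiff_le_sup.trans <| Finset.union_subset
      ((Finset.filter_subset _ _).trans (Finset.Icc_subset_Icc le_rfl (le_max_left _ _)))
      ((Finset.filter_subset _ _).trans (Finset.Icc_subset_Icc le_rfl (le_max_right _ _)))
  simpa using Finset.card_le_card hsub

theorem card_gridSet_symmDiff_le_of_volume_le {B : Set ℝ} {ρ v : ℝ} (hρ : 0 < ρ) (hv : 0 ≤ v)
    (hvol : volume (thickening ρ (frontier B)) ≤ ENNReal.ofReal v) {n : ℕ} (hn : 0 < n)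
    (k : ℕ) :
    (#(gridSet B n ∆ gridSet B k) : ℝ) ≤ n * v + 2 / ρ + (1 + 1 / ρ) * |(k : ℝ) - n| := by
  set δ := |(k : ℝ) - n|
  have hδ : 0 ≤ δ := abs_nonneg _
  have hn' : (0 : ℝ) < n := by exact_mod_cast hn
  have hδρ : 0 ≤ δ / ρ := by positivity
  have hsplit : (1 + 1 / ρ) * δ = δ + δ / ρ := by ring
  by_cases hsmall : (δ + 2) / n ≤ ρ
  · have h : (#(gridSet B n ∆ gridSet B k) : ℝ≥0∞) ≤ ENNReal.ofReal (n * v + δ) := by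
      rw [ENNReal.ofReal_add (by positivity) hδ, ENNReal.ofReal_mul n.cast_nonneg,
        ENNReal.ofReal_natCast]
      calc (#(gridSet B n ∆ gridSet B k) : ℝ≥0∞)
          ≤ n * volume (thickening ((δ + 2) / n) (frontier B)) + ENNReal.ofReal δ :=
            card_gridSet_symmDiff_le B hn k
        _ ≤ n * ENNReal.ofReal v + ENNReal.ofReal δ := by
            gcongr
            exact (measure_mono (thickening_mono hsmall _)).trans hvol
    rw [← ENNReal.ofReal_natCast, ENNReal.ofReal_le_ofReal_iff (by positivity)] at h
    have : 0 ≤ 2 / ρ := by positivity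
    linarith
  · have hnρ : n < δ / ρ + 2 / ρ := by
      rw [not_le, lt_div_iff₀ hn'] at hsmall
      rw [← add_div, lt_div_iff₀ hρ]
      linarith
    have hmax : ((max n k : ℕ) : ℝ) ≤ n + δ := by
      rw [Nat.cast_max]
      exact max_le (by linarith) (by linarith [le_abs_self ((k : ℝ) - n)])
    calc (#(gridSet B n ∆ gridSet B k) : ℝ) ≤ (max n k : ℕ) := by
          exact_mod_cast card_gridSet_symmDiff_le_max B n k
      _ ≤ n * v + 2 / ρ + (1 + 1 / ρ) * δ := by
          have : 0 ≤ n * v := by positivity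
          linarith

theorem exists_le_abs_sum_gridSet_sub {B : Set ℝ} (n : ℕ) (h : ∃ k, (gridSet B k).Nonempty) :
    ∃ k j, ∀ x : ℕ → ℝ, (∀ i, 0 ≤ x i) →
      x j ≤ |∑ i ∈ gridSet B n, x i - ∑ i ∈ gridSet B k, x i| := by
  rcases (gridSet B n).eq_empty_or_nonempty with hn | ⟨j, hj⟩
  · obtain ⟨k, j, hj⟩ := h
    refine ⟨k, j, fun x hx => ?_⟩
    rw [hn, Finset.sum_empty, zero_sub, abs_neg, abs_of_nonneg (Finset.sum_nonneg fun i _ => hx i)]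
    exact Finset.single_le_sum (fun i _ => hx i) hj
  · refine ⟨0, j, fun x hx => ?_⟩
    rw [gridSet_zero, Finset.sum_empty, sub_zero,
      abs_of_nonneg (Finset.sum_nonneg fun i _ => hx i)]
    exact Finset.single_le_sum (fun i _ => hx i) hj

theorem integral_abs_sum_gridSet_sub_le {Ω : Type*} [MeasurableSpace Ω] {P : Measure Ω}
    [IsProbabilityMeasure P] {ξ : ℕ → Ω → ℝ} (hξ : ∀ i, Measurable (ξ i))
    (hξ₀ : ∀ i ω, 0 ≤ ξ i ω) (hident : ∀ i, IdentDistrib (ξ i) (ξ 1) P P) {c : ℝ}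
    (hmean : ∫ ω, ξ 1 ω ∂P ≤ c) {N : Ω → ℕ} (hN : Measurable N) {n : ℕ} (hn : 0 < n)
    (hlaw : ∀ k, P {ω | N ω = k} = ENNReal.ofReal (Real.exp (-n) * n ^ k / k !))
    (hindep : IndepFun N (fun ω i => ξ i ω) P) {B : Set ℝ} {a b : ℝ} (ha : 0 ≤ a) (hb : 0 ≤ b)
    (hcard : ∀ k, (#(gridSet B n ∆ gridSet B k) : ℝ) ≤ a + b * |(k : ℝ) - n|) :
    ∫ ω, |∑ i ∈ gridSet B n, ξ i ω - ∑ i ∈ gridSet B (N ω), ξ i ω| ∂P ≤ c * (a + b * √n) := by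
  classical
  set G := fun ω => |∑ i ∈ gridSet B n, ξ i ω - ∑ i ∈ gridSet B (N ω), ξ i ω|
  have hc : 0 ≤ c := (integral_nonneg (hξ₀ 1)).trans hmean
  have hbound : 0 ≤ c * (a + b * √n) := by positivity
  by_cases hG : Integrable G P
  swap
  · rw [integral_undef hG]
    exact hbound
  by_cases hempty : ∃ k, (gridSet B k).Nonempty
  swap
  · have hzero : ∀ k, gridSet B k = ∅ := by
      simpa only [not_exists, Finset.not_nonempty_iff_eq_empty] using hempty
    simpa [G, hzero] using hbound
  obtain ⟨k, j, hkj⟩ := exists_le_abs_sum_gridSet_sub n hempty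
  have hlaw' : P.map N = poissonMeasure n := map_eq_poissonMeasure hN fun k => by
    simpa using hlaw k
  have hk : P {ω | N ω = k} ≠ 0 := by
    rw [hlaw]
    exact (ENNReal.ofReal_pos.2 (by positivity)).ne'
  -- `hmean` says nothing about a non-integrable `ξ 1` (its Bochner integral is then `0`), so
  -- integrability of `ξ 1` has to be read off from that of the integrand.
  have hξ1 : Integrable (ξ 1) P := integrable_of_le_on_levelSet hξ hξ₀ hN hindep hident hG hk
    fun ω hω => hω ▸ hkj (ξ · ω) (hξ₀ · ω)
  have hmean' : ∫⁻ ω, ENNReal.ofReal (ξ 1 ω) ∂P ≤ ENNReal.ofReal c := by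
    rw [← ofReal_integral_eq_lintegral_ofReal hξ1 (ae_of_all _ (hξ₀ 1))]
    exact ENNReal.ofReal_le_ofReal hmean
  have hcount : ∫⁻ ω, (#(gridSet B n ∆ gridSet B (N ω)) : ℝ≥0∞) ∂P ≤
      ENNReal.ofReal (a + b * √n) := by
    simpa using lintegral_comp_le_of_map_eq_poissonMeasure hN
      (by exact_mod_cast hn : (0 : ℝ≥0) < n) hlaw' ha hb
      (f := fun k => (#(gridSet B n ∆ gridSet B k) : ℝ≥0∞)) fun k => by
        rw [NNReal.coe_natCast, ← ENNReal.ofReal_natCast]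
        exact ENNReal.ofReal_le_ofReal (hcard k)
  rw [integral_eq_lintegral_of_nonneg_ae (ae_of_all _ fun ω => abs_nonneg _)
    hG.aestronglyMeasurable]
  refine ENNReal.toReal_le_of_le_ofReal hbound ?_
  calc ∫⁻ ω, ENNReal.ofReal (G ω) ∂P
      ≤ (∫⁻ ω, (#(gridSet B n ∆ gridSet B (N ω)) : ℝ≥0∞) ∂P) *
          ∫⁻ ω, ENNReal.ofReal (ξ 1 ω) ∂P :=
        lintegral_abs_sum_sub_sum_le hξ hξ₀ hN hindep hident _ _
    _ ≤ ENNReal.ofReal (a + b * √n) * ENNReal.ofReal c := by gcongr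
    _ = ENNReal.ofReal (c * (a + b * √n)) := by
        rw [← ENNReal.ofReal_mul (by positivity), mul_comm]

theorem dePoissonization_general {Ω : Type*} [MeasurableSpace Ω]
    (P : Measure Ω) [IsProbabilityMeasure P]
    (ξ : ℕ → ℕ → Ω → ℝ) (hmeas : ∀ n i, Measurable (ξ n i))
    (hnonneg : ∀ n i ω, 0 ≤ ξ n i ω)
    (hident : ∀ n i, IdentDistrib (ξ n i) (ξ n 1) P P)
    (C : ℝ) (hmean : ∀ n : ℕ, 1 ≤ n → ∫ ω, ξ n 1 ω ∂P ≤ C / n)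
    (N : ℕ → Ω → ℕ) (hNmeas : ∀ n, Measurable (N n))
    (hPois : ∀ n k : ℕ,
      P {ω | N n ω = k} =
        ENNReal.ofReal (Real.exp (-(n:ℝ)) * (n:ℝ) ^ k / (Nat.factorial k)))
    (hNindep : ∀ n, IndepFun (N n) (fun ω => (fun i => ξ n i ω : ℕ → ℝ)) P)
    (B : Set ℝ) (hBsub : B ⊆ Set.Icc (0:ℝ) 1)
    (hBbdry : volume (frontier B) = 0) :
    Tendsto
      (fun n : ℕ =>
        ∫ ω,
          |(∑ i ∈ Finset.Icc 1 n, Set.indicator B (fun _ => ξ n i ω) ((i:ℝ) / n)) -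
            ∑ i ∈ Finset.Icc 1 (N n ω),
              Set.indicator B (fun _ => ξ n i ω) ((i:ℝ) / (N n ω))| ∂P)
      atTop (nhds 0) := by
  have hC : 0 ≤ C := by
    simpa using (integral_nonneg (hnonneg 1 1)).trans (hmean 1 le_rfl)
  have hfin : ∃ R > 0, volume (thickening R (frontier B)) ≠ ∞ :=
    ⟨1, one_pos, ((isBounded_Icc (0 : ℝ) 1).subset (frontier_subset_closure.trans
      (closure_minimal hBsub isClosed_Icc))).thickening.measure_lt_top.ne⟩
  refine tendsto_nhds_zero_of_forall_eventually_le
    (fun n => integral_nonneg fun ω => abs_nonneg _) fun ε hε => ?_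
  have hv : 0 < ε / (C + 1) := by positivity
  obtain ⟨ρ, hρ, hvol⟩ := exists_pos_measure_thickening_le hfin
    (by rwa [isClosed_frontier.closure_eq]) (ENNReal.ofReal_pos.2 hv)
  refine ⟨fun n => C * (2 / ρ) / n + C * (1 + 1 / ρ) / √n, ?_, ?_⟩
  · simpa using (tendsto_const_div_atTop_nhds_zero_nat _).add
      ((tendsto_const_nhds (x := C * (1 + 1 / ρ))).div_atTop
      (Real.tendsto_sqrt_atTop.comp tendsto_natCast_atTop_atTop))
  filter_upwards [eventually_ge_atTop 1] with n hn
  have hn' : (0 : ℝ) < n := by exact_mod_cast hn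
  simp only [sum_indicator_eq_sum_gridSet]
  calc _ ≤ C / n * (n * (ε / (C + 1)) + 2 / ρ + (1 + 1 / ρ) * √n) :=
        integral_abs_sum_gridSet_sub_le (hmeas n) (hnonneg n) (hident n) (hmean n hn)
          (hNmeas n) hn (hPois n) (hNindep n) (by positivity) (by positivity)
          (card_gridSet_symmDiff_le_of_volume_le hρ hv.le hvol hn)
    _ = C * (ε / (C + 1)) + (C * (2 / ρ) / n + C * (1 + 1 / ρ) / √n) := by
        field_simp
        linear_combination C * (C + 1) * (ρ + 1) * Real.mul_self_sqrt hn'.le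
    _ ≤ ε + (C * (2 / ρ) / n + C * (1 + 1 / ρ) / √n) := by
        gcongr
        rw [mul_div_assoc', div_le_iff₀ (by positivity)]
        linarith

/-- de-Poissonization.  If `(ξ_i)` are i.i.d. nonnegative with
`E[ξ₁] ≤ C/n` (the law may depend on `n`), `N_n` is Poisson of mean `n`
independent of the sequence, and `B ⊆ [0,1]` has null boundary and satisfies the
uniform Riemann approximation property, then
`E[|∑_{i=1}^n 1{i/n ∈ B} ξ_i − ∑_{i=1}^{N_n} 1{i/N_n ∈ B} ξ_i|] → 0`. -/
theorem dePoissonization {Ω : Type*} [MeasurableSpace Ω]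
    (P : Measure Ω) [IsProbabilityMeasure P]
    (ξ : ℕ → ℕ → Ω → ℝ) (hmeas : ∀ n i, Measurable (ξ n i))
    (hnonneg : ∀ n i ω, 0 ≤ ξ n i ω)
    (hiid : ∀ n, iIndepFun (fun i => ξ n i) P)
    (hident : ∀ n i, IdentDistrib (ξ n i) (ξ n 1) P P)
    (C : ℝ) (hmean : ∀ n : ℕ, 1 ≤ n → ∫ ω, ξ n 1 ω ∂P ≤ C / n)
    (N : ℕ → Ω → ℕ) (hNmeas : ∀ n, Measurable (N n))
    (hPois : ∀ n k : ℕ,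
      P {ω | N n ω = k} =
        ENNReal.ofReal (Real.exp (-(n:ℝ)) * (n:ℝ) ^ k / (Nat.factorial k)))
    (hNindep : ∀ n, IndepFun (N n) (fun ω => (fun i => ξ n i ω : ℕ → ℝ)) P)
    (B : Set ℝ) (hBsub : B ⊆ Set.Icc (0:ℝ) 1) (hBmeas : MeasurableSet B)
    (hBbdry : volume (frontier B) = 0)
    (hRiemann : ∀ ε : ℝ, 0 < ε → ∃ N₀ : ℕ, ∀ m : ℕ, N₀ ≤ m →
      |(volume B).toReal -
          (m:ℝ)⁻¹ * ({i : ℕ | i ∈ Finset.Icc 1 m ∧ ((i:ℝ) / m) ∈ B}.ncard : ℝ)| ≤ ε) :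
    Tendsto
      (fun n : ℕ =>
        ∫ ω,
          |(∑ i ∈ Finset.Icc 1 n, Set.indicator B (fun _ => ξ n i ω) ((i:ℝ) / n)) -
            ∑ i ∈ Finset.Icc 1 (N n ω),
              Set.indicator B (fun _ => ξ n i ω) ((i:ℝ) / (N n ω))| ∂P)
      atTop (nhds 0) :=
  dePoissonization_general P ξ hmeas hnonneg hident C hmean N hNmeas hPois hNindep B hBsub hBbdry
end

section
/- Let d ≥ 2, k ≥ 2 and (k−1)/2 < α < k−1. Set a_{k,n} = B n^{(k−1)/(2α)} for a constant B > 0, and suppose that for some constants C, C₁ > 0 and all sufficiently large n and all u ∈ [ε₀, γR_n] (with 0 < ε₀ < 1, γ ∈ (1/(2α),1), R_n = (2/(d−1)) log n) the bound μ_n(u) ≥ C₁ e^{(d−1)(k−1)u/2} holds. Then n a_{k,n}^{-2} ∫_{ε₀}^{γR_n} e^{(d−1)(k−1−α)u} 1{μ_n(u) ≤ ε a_{k,n}} du ≤ C ε^{2(k−1−α)/(k−1)} for all sufficiently large n, uniformly in ε ∈ (0,1). -/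
open MeasureTheory Set Filter Real

/-- truncated-variance estimate.  If `μ_n` is nondecreasing and
`μ_n(u) ≥ C₁ e^{(d-1)(k-1)u/2}` for large `n` and `u ∈ [ε₀, γ R_n]`, then
`n a_{k,n}^{-2} ∫_{ε₀}^{γR_n} e^{(d-1)(k-1-α)u} 1{μ_n(u) ≤ ε a_{k,n}} du
  ≤ C ε^{2(k-1-α)/(k-1)}` for all large `n`, uniformly in `ε ∈ (0,1)`. -/
theorem truncated_variance_estimate (d k : ℕ) (hd : 2 ≤ d) (hk : 2 ≤ k)
    (α : ℝ) (hα₁ : ((k:ℝ) - 1) / 2 < α) (hα₂ : α < (k:ℝ) - 1)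
    (B : ℝ) (hB : 0 < B) (ε₀ : ℝ) (hε₀ : ε₀ ∈ Set.Ioo (0:ℝ) 1)
    (γ : ℝ) (hγ : γ ∈ Set.Ioo (1 / (2 * α)) 1)
    (C₁ : ℝ) (hC₁ : 0 < C₁)
    (R a : ℕ → ℝ)
    (hR : ∀ n, R n = 2 / ((d:ℝ) - 1) * Real.log n)
    (ha : ∀ n, a n = B * (n:ℝ) ^ (((k:ℝ) - 1) / (2 * α)))
    (μ : ℕ → ℝ → ℝ) (hmono : ∀ n, Monotone (μ n))
    (hlow : ∃ N₀ : ℕ, ∀ n ≥ N₀, ∀ u ∈ Set.Icc ε₀ (γ * R n),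
        C₁ * Real.exp (((d:ℝ) - 1) * ((k:ℝ) - 1) * u / 2) ≤ μ n u) :
    ∃ C : ℝ, 0 < C ∧ ∃ N : ℕ, ∀ ε ∈ Set.Ioo (0:ℝ) 1, ∀ n ≥ N,
      (n:ℝ) * (a n)⁻¹ ^ 2 *
          ∫ u in Set.Icc ε₀ (γ * R n),
            (if μ n u ≤ ε * a n then
                Real.exp (((d:ℝ) - 1) * ((k:ℝ) - 1 - α) * u)
              else 0)
        ≤ C * ε ^ (2 * ((k:ℝ) - 1 - α) / ((k:ℝ) - 1)) := by
  obtain ⟨N₀, hN₀⟩ := hlow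
  obtain ⟨hε₀0, hε₀1⟩ := hε₀
  have hk1 : (1:ℝ) ≤ (k:ℝ) - 1 := by
    have h2 : (2:ℝ) ≤ (k:ℝ) := by exact_mod_cast hk
    linarith
  have hk1' : (0:ℝ) < (k:ℝ) - 1 := by linarith
  have hd1 : (0:ℝ) < (d:ℝ) - 1 := by
    have h2 : (2:ℝ) ≤ (d:ℝ) := by exact_mod_cast hd
    linarith
  have hα0 : 0 < α := lt_trans (by positivity) hα₁
  set δ := ((d:ℝ) - 1) * ((k:ℝ) - 1 - α) with hδdef
  have hδ : 0 < δ := mul_pos hd1 (by linarith)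
  set p := 2 * ((k:ℝ) - 1 - α) / ((k:ℝ) - 1) with hpdef
  have hp0 : 0 < p := div_pos (by linarith) hk1'
  set β := ((d:ℝ) - 1) * ((k:ℝ) - 1) / 2 with hβdef
  have hβ : 0 < β := by
    rw [hβdef]; positivity
  have hβp : β * p = δ := by
    rw [hβdef, hpdef, hδdef]; field_simp
  set q := ((k:ℝ) - 1) / (2 * α) with hqdef
  have hq2 : q * (p - 2) = -1 := by
    rw [hqdef, hpdef]; field_simp; ring
  have hCpos : 0 < B ^ (p - 2) * C₁ ^ (-p) / δ := by positivity
  refine ⟨B ^ (p - 2) * C₁ ^ (-p) / δ, hCpos, max N₀ 1, ?_⟩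
  intro ε hε n hn
  obtain ⟨hε0, hε1⟩ := hε
  have hnN : N₀ ≤ n := le_trans (le_max_left _ _) hn
  have hn1 : 1 ≤ n := le_trans (le_max_right _ _) hn
  have hn0 : (0:ℝ) < n := by exact_mod_cast hn1
  have hanpos : 0 < a n := by rw [ha n]; positivity
  set T := ε * a n / C₁ with hTdef
  have hT : 0 < T := by positivity
  set M := Real.log T / β with hMdef
  have key : ∀ u ∈ Set.Icc ε₀ (γ * R n), μ n u ≤ ε * a n → u ≤ M := by
    intro u hu hμ
    have h1 := hN₀ n hnN u hu
    have h2 : C₁ * Real.exp (β * u) ≤ ε * a n := by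
      calc C₁ * Real.exp (β * u)
          = C₁ * Real.exp (((d:ℝ) - 1) * ((k:ℝ) - 1) * u / 2) := by
            rw [hβdef]; ring_nf
        _ ≤ μ n u := h1
        _ ≤ ε * a n := hμ
    have h3 : Real.exp (β * u) ≤ T := by
      rw [hTdef, le_div_iff₀ hC₁]
      nlinarith [h2]
    have h4 : β * u ≤ Real.log T := (Real.le_log_iff_exp_le hT).mpr h3
    rw [hMdef, le_div_iff₀ hβ]
    nlinarith [h4]
  by_cases hM : ε₀ ≤ M
  · -- main case: the support is contained in Icc ε₀ M
    have cont : Continuous fun u : ℝ => Real.exp (δ * u) :=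
      Real.continuous_exp.comp (continuous_const.mul continuous_id)
    have hind : IntegrableOn (fun u => Real.exp (δ * u)) (Set.Icc ε₀ M) :=
      cont.integrableOn_Icc
    have hgint : Integrable ((Set.Icc ε₀ M).indicator fun u => Real.exp (δ * u)) :=
      hind.integrable_indicator measurableSet_Icc
    have hSmeas : MeasurableSet {u : ℝ | μ n u ≤ ε * a n} :=
      (hmono n).measurable measurableSet_Iic
    have hfeq : (fun u => if μ n u ≤ ε * a n then Real.exp (δ * u) else 0)
        = {u : ℝ | μ n u ≤ ε * a n}.indicator fun u => Real.exp (δ * u) := by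
      ext u; simp [Set.indicator_apply, Set.mem_setOf_eq]
    have hfint : IntegrableOn
        (fun u => if μ n u ≤ ε * a n then Real.exp (δ * u) else 0)
        (Set.Icc ε₀ (γ * R n)) := by
      apply Integrable.mono' cont.integrableOn_Icc
      · rw [hfeq]
        exact (cont.measurable.indicator hSmeas).aestronglyMeasurable
      · filter_upwards with u
        by_cases h : μ n u ≤ ε * a n <;>
          simp [h, abs_of_nonneg (Real.exp_nonneg _), Real.exp_nonneg]
    have step1 : (∫ u in Set.Icc ε₀ (γ * R n),
          (if μ n u ≤ ε * a n then Real.exp (δ * u) else 0))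
        ≤ ∫ u in Set.Icc ε₀ M, Real.exp (δ * u) := by
      calc (∫ u in Set.Icc ε₀ (γ * R n),
              (if μ n u ≤ ε * a n then Real.exp (δ * u) else 0))
          ≤ ∫ u in Set.Icc ε₀ (γ * R n),
              (Set.Icc ε₀ M).indicator (fun u => Real.exp (δ * u)) u := by
            apply setIntegral_mono_on hfint hgint.integrableOn measurableSet_Icc
            intro u hu
            by_cases h : μ n u ≤ ε * a n
            · have hu2 : u ∈ Set.Icc ε₀ M := ⟨hu.1, key u hu h⟩
              simp [h, Set.indicator_of_mem hu2]
            · simp only [h, if_false]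
              exact Set.indicator_nonneg (fun _ _ => Real.exp_nonneg _) u
        _ ≤ ∫ u, (Set.Icc ε₀ M).indicator (fun u => Real.exp (δ * u)) u :=
            setIntegral_le_integral hgint
              (by filter_upwards with u
                  exact Set.indicator_nonneg (fun _ _ => Real.exp_nonneg _) u)
        _ = ∫ u in Set.Icc ε₀ M, Real.exp (δ * u) :=
            integral_indicator measurableSet_Icc
    have step2 : (∫ u in Set.Icc ε₀ M, Real.exp (δ * u)) ≤ Real.exp (δ * M) / δ := by
      have hderiv : ∀ u ∈ Set.uIcc ε₀ M,
          HasDerivAt (fun u => Real.exp (δ * u) / δ) (Real.exp (δ * u)) u := by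
        intro u _
        have h := ((hasDerivAt_id u).const_mul δ).exp.div_const δ
        simpa [mul_one, mul_div_cancel_right₀ _ hδ.ne'] using h
      have heq : (∫ u in ε₀..M, Real.exp (δ * u))
          = Real.exp (δ * M) / δ - Real.exp (δ * ε₀) / δ :=
        intervalIntegral.integral_eq_sub_of_hasDerivAt hderiv
          (cont.intervalIntegrable _ _)
      rw [MeasureTheory.integral_Icc_eq_integral_Ioc,
        ← intervalIntegral.integral_of_le hM, heq]
      have h1 : 0 < Real.exp (δ * ε₀) / δ := div_pos (Real.exp_pos _) hδ
      linarith
    have step3 : Real.exp (δ * M) = T ^ p := by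
      rw [Real.rpow_def_of_pos hT]
      congr 1
      rw [hMdef, ← hβp]
      field_simp
    have hIle : (∫ u in Set.Icc ε₀ (γ * R n),
          (if μ n u ≤ ε * a n then Real.exp (δ * u) else 0)) ≤ T ^ p / δ := by
      rw [← step3]; exact le_trans step1 step2
    have hfac : (0:ℝ) ≤ (n:ℝ) * (a n)⁻¹ ^ 2 := by positivity
    calc (n:ℝ) * (a n)⁻¹ ^ 2 * (∫ u in Set.Icc ε₀ (γ * R n),
            (if μ n u ≤ ε * a n then Real.exp (δ * u) else 0))
        ≤ (n:ℝ) * (a n)⁻¹ ^ 2 * (T ^ p / δ) := mul_le_mul_of_nonneg_left hIle hfac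
      _ = B ^ (p - 2) * C₁ ^ (-p) / δ * ε ^ p := by
          have hx : (0:ℝ) < (n:ℝ) ^ q := Real.rpow_pos_of_pos hn0 q
          have hTp : T ^ p = ε ^ p * (B ^ p * ((n:ℝ) ^ q) ^ p) / C₁ ^ p := by
            rw [hTdef, ha n, Real.div_rpow (by positivity) hC₁.le,
              Real.mul_rpow hε0.le (by positivity),
              Real.mul_rpow hB.le hx.le]
          have hsplitB : B ^ (p - 2) = B ^ p * (B ^ (2:ℕ))⁻¹ := by
            rw [← Real.rpow_natCast B 2, ← Real.rpow_neg hB.le,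
              ← Real.rpow_add hB]
            norm_num [sub_eq_add_neg]
          have hsplitx : ((n:ℝ) ^ q) ^ (p - 2)
              = ((n:ℝ) ^ q) ^ p * (((n:ℝ) ^ q) ^ (2:ℕ))⁻¹ := by
            rw [← Real.rpow_natCast ((n:ℝ) ^ q) 2, ← Real.rpow_neg hx.le,
              ← Real.rpow_add hx]
            norm_num [sub_eq_add_neg]
          have hxval : ((n:ℝ) ^ q) ^ (p - 2) = ((n:ℝ))⁻¹ := by
            rw [← Real.rpow_mul hn0.le, hq2, Real.rpow_neg_one]
          have hCneg : C₁ ^ (-p) = (C₁ ^ p)⁻¹ := Real.rpow_neg hC₁.le p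
          have h1 : ((n:ℝ) ^ q) ^ p * (((n:ℝ) ^ q) ^ (2:ℕ))⁻¹ = ((n:ℝ))⁻¹ := by
            rw [← hsplitx, hxval]
          rw [hTp, ha n, hsplitB, hCneg, mul_inv, mul_pow, inv_pow, inv_pow]
          have h2 : (n:ℝ) * ((B ^ (2:ℕ))⁻¹ * ((((n:ℝ) ^ q)) ^ (2:ℕ))⁻¹) *
              (ε ^ p * (B ^ p * ((n:ℝ) ^ q) ^ p) / C₁ ^ p / δ)
              = ((n:ℝ) * (((n:ℝ) ^ q) ^ p * (((n:ℝ) ^ q) ^ (2:ℕ))⁻¹)) *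
                ((B ^ (2:ℕ))⁻¹ * B ^ p * ε ^ p / C₁ ^ p / δ) := by ring
          rw [h2, h1, mul_inv_cancel₀ hn0.ne']
          ring
  · -- degenerate case: the indicator is identically zero on the interval
    push_neg at hM
    have hzero : (∫ u in Set.Icc ε₀ (γ * R n),
        (if μ n u ≤ ε * a n then Real.exp (δ * u) else 0)) = 0 := by
      apply setIntegral_eq_zero_of_forall_eq_zero
      intro u hu
      rw [if_neg]
      intro h
      exact absurd (le_trans hu.1 (key u hu h)) (not_le.mpr hM)
    rw [hzero, mul_zero]
    exact le_of_lt (mul_pos hCpos (Real.rpow_pos_of_pos hε0 p))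
end
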